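/- Let d ≥ 2 and let S be a nonempty finite set of permutations of Fin d, with characteristic polynomial f_S, and let α = sSup {x ∈ [0,1] : f_S(x) = x} be the largest fixed point of f_S in [0,1]. Then there exists a nonzero real polynomial q with natural degree at most d − 1, all of whose coefficients are of the form m/#S with m ∈ ℤ, such that q(α) = 0. -/

import Mathlib

open Finset Filter

/-- The number of fixed points of a permutation of `Fin d`. -/
def numFix {d : ℕ} (σ : Equiv.Perm (Fin d)) : ℕ :=
  (Finset.univ.filter fun i => σ i = i).card

/-- `D S k` is the number of permutations in `S` having exactly `k` fixed points. -/
def D {d : ℕ} (S : Finset (Equiv.Perm (Fin d))) (k : ℕ) : ℕ :=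
  (S.filter fun σ => numFix σ = k).card

/-- The characteristic polynomial of a finite set of permutations of `Fin d`:
`f_S(x) = ∑_{k=1}^{d} (D_S(k)/#S)·(1 − (1 − x)^k)`. -/
noncomputable def fS {d : ℕ} (S : Finset (Equiv.Perm (Fin d))) (x : ℝ) : ℝ :=
  ∑ k ∈ Finset.Icc 1 d, ((D S k : ℝ) / (S.card : ℝ)) * (1 - (1 - x) ^ k)

/-!
Since `1 - (1 - x)^k = x · ∑_{j<k} (1 - x)^j`, the equation `#S · (f_S(x) - x) = 0` factors as
`x · p_S(x) = 0` with `p_S ∈ ℤ[X]` of degree at most `d - 1`. The largest fixed point `α` of `f_S`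
in `[0, 1]` exists by compactness, and it is a root of `X` if `α = 0`, of `X - 1` if `p_S = 0`
(then every point is fixed), and of `p_S` otherwise.
-/

open Polynomial

theorem Polynomial.exists_coeff_eq_intCast_div_of_aeval_eq_zero {K : Type*} [Field K]
    [CharZero K] {N n : ℕ} (hN : N ≠ 0) {α : K} {p : ℤ[X]} (hp : p ≠ 0) (hdeg : p.natDegree ≤ n)
    (hα : aeval α p = 0) :
    ∃ q : K[X], q ≠ 0 ∧ q.natDegree ≤ n ∧ (∀ i, ∃ m : ℤ, q.coeff i = (m : K) / N) ∧
      q.eval α = 0 := by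
  refine ⟨p.map (algebraMap ℤ K), (Polynomial.map_ne_zero_iff Int.cast_injective).2 hp,
    natDegree_map_le.trans hdeg, fun i => ⟨p.coeff i * N, ?_⟩, by rwa [eval_map_algebraMap]⟩
  rw [coeff_map, eq_intCast]
  push_cast
  field_simp

theorem sSup_mem_of_continuous_fixedPoints_Icc {f : ℝ → ℝ} (hf : Continuous f) {a b : ℝ}
    (hne : ∃ x ∈ Set.Icc a b, f x = x) :
    sSup {x ∈ Set.Icc a b | f x = x} ∈ {x ∈ Set.Icc a b | f x = x} :=
  (isClosed_Icc.inter (isClosed_eq hf continuous_id)).csSup_mem hne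
    (bddAbove_Icc.mono fun _ hx => hx.1)

section FixedPointPoly

variable {d : ℕ} (S : Finset (Equiv.Perm (Fin d)))

theorem continuous_fS : Continuous (fS S) := by
  unfold fS
  fun_prop

theorem fS_zero : fS S 0 = 0 := by
  simp [fS]

/-- The polynomial `p_S = #S · (f_S(X) - X) / X`. -/
noncomputable def fixedPointPoly : ℤ[X] :=
  ∑ k ∈ Icc 1 d, C (D S k : ℤ) * ∑ j ∈ range k, (1 - X) ^ j - C (S.card : ℤ)

theorem natDegree_fixedPointPoly_le : (fixedPointPoly S).natDegree ≤ d - 1 := by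
  have h1X : (1 - X : ℤ[X]).natDegree ≤ 1 := (natDegree_sub_le _ _).trans (by simp)
  refine (natDegree_sub_le _ _).trans (max_le ?_ (by simp))
  refine natDegree_sum_le_of_forall_le _ _ fun k hk => (natDegree_C_mul_le _ _).trans ?_
  refine natDegree_sum_le_of_forall_le _ _ fun j hj => (natDegree_pow_le_of_le j h1X).trans ?_
  simp only [mem_Icc] at hk
  simp only [mem_range] at hj
  omega

theorem mul_fS_sub_self (hS : S.Nonempty) (x : ℝ) :
    (S.card : ℝ) * (fS S x - x) = x * aeval x (fixedPointPoly S) := by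
  have hgeom (k : ℕ) : 1 - (1 - x) ^ k = x * ∑ j ∈ range k, (1 - x) ^ j := by
    rw [← mul_neg_geom_sum, sub_sub_cancel]
  have hN : (S.card : ℝ) ≠ 0 := by exact_mod_cast hS.card_ne_zero
  simp only [fixedPointPoly, fS, map_sub, map_sum, map_mul, map_pow, aeval_X, map_one,
    map_natCast, hgeom]
  rw [mul_sub, mul_sub, mul_comm x (S.card : ℝ), Finset.mul_sum, Finset.mul_sum]
  congr 1
  refine sum_congr rfl fun k _ => ?_
  field_simp

theorem fS_eq_self_iff (hS : S.Nonempty) (x : ℝ) :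
    fS S x = x ↔ x = 0 ∨ aeval x (fixedPointPoly S) = 0 := by
  rw [← mul_eq_zero, ← mul_fS_sub_self S hS, mul_eq_zero, sub_eq_zero,
    or_iff_right (by exact_mod_cast hS.card_ne_zero)]

end FixedPointPoly

theorem stmt7 (d : ℕ) (hd : 2 ≤ d) (S : Finset (Equiv.Perm (Fin d))) (hS : S.Nonempty) :
    ∃ q : Polynomial ℝ, q ≠ 0 ∧ q.natDegree ≤ d - 1 ∧
      (∀ i, ∃ m : ℤ, q.coeff i = (m : ℝ) / (S.card : ℝ)) ∧
      q.eval (sSup {x ∈ Set.Icc (0 : ℝ) 1 | fS S x = x}) = 0 := by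
  set α := sSup {x ∈ Set.Icc (0 : ℝ) 1 | fS S x = x}
  have hα : α ∈ {x ∈ Set.Icc (0 : ℝ) 1 | fS S x = x} :=
    sSup_mem_of_continuous_fixedPoints_Icc (continuous_fS S) ⟨0, by simp, fS_zero S⟩
  suffices ∃ p : ℤ[X], p ≠ 0 ∧ p.natDegree ≤ d - 1 ∧ aeval α p = 0 by
    obtain ⟨p, hp, hdeg, hpα⟩ := this
    exact exists_coeff_eq_intCast_div_of_aeval_eq_zero hS.card_ne_zero hp hdeg hpα
  rcases eq_or_ne α 0 with hα0 | hα0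
  · exact ⟨X, X_ne_zero, by rw [natDegree_X]; omega, by simp [hα0]⟩
  by_cases hp : fixedPointPoly S = 0
  · have h1 : (1 : ℝ) ∈ {x ∈ Set.Icc (0 : ℝ) 1 | fS S x = x} :=
      ⟨by simp, (fS_eq_self_iff S hS 1).2 (.inr (by simp [hp]))⟩
    have hα1 : α = 1 :=
      le_antisymm hα.1.2 (le_csSup (bddAbove_Icc.mono fun _ hx => hx.1) h1)
    exact ⟨X - C 1, X_sub_C_ne_zero 1, by rw [natDegree_X_sub_C]; omega, by simp [hα1]⟩
  · refine ⟨fixedPointPoly S, hp, natDegree_fixedPointPoly_le S, ?_⟩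
    exact ((fS_eq_self_iff S hS α).1 hα.2).resolve_left hα0
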